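/- Let F be a field and I a monomial ideal of F[x_1,...,x_n] generated in a single degree D by a set of monomials that is a lex segment (closed upward under the lexicographic order within degree D). Then for every d ≥ D, the set of degree-d monomials in I is also a lex segment: if m, m' are monomials of degree d with m ≥_lex m' and m' ∈ I, then m ∈ I. -/

import Mathlib

/-!
For a monomial `m` of degree `d ≥ D`, let `b` be the greedy degree-`D` divisor of `m`: take as
much of `x₁` as `m` allows, then as much of `x₂` as still fits, and so on. If `m' ≤_lex m` and
`a` is a divisor of `m'` of degree at most `D`, then `a ≤_lex b`: compare exponents one variable
at a time, and note that once `b` has used up its degree `D`, so has `a`. So if `m'` lies in the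
ideal generated by `S`, witnessed by a generator `a ∈ S` dividing it, then `b ∈ S` because `S` is
a lex segment, and `b ∣ m`.
-/

open MvPolynomial

namespace Finsupp

variable {n : ℕ}

theorem degree_cons {M : Type*} [AddCommMonoid M] (y : M) (s : Fin n →₀ M) :
    (cons y s).degree = y + s.degree := by
  simp only [degree_eq_sum, Fin.sum_univ_succ, cons_zero, cons_succ]

theorem toLex_cons_lt_cons_iff {M : Type*} [Zero M] [LT M] {x y : M} {s t : Fin n →₀ M} :
    toLex (cons x s) < toLex (cons y t) ↔ x < y ∨ x = y ∧ toLex s < toLex t :=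
  Fin.pi_lex_lt_cons_cons (α := fun _ => M) (x₀ := x) (y₀ := y) (x := ⇑s) (y := ⇑t) (· < ·)

theorem toLex_cons_le_cons_iff {M : Type*} [Zero M] [PartialOrder M] {x y : M}
    {s t : Fin n →₀ M} :
    toLex (cons x s) ≤ toLex (cons y t) ↔ x < y ∨ x = y ∧ toLex s ≤ toLex t := by
  simp only [le_iff_lt_or_eq, toLex_cons_lt_cons_iff, toLex_inj, cons_injective2.eq_iff]
  tauto

theorem cons_le_cons_iff {M : Type*} [Zero M] [Preorder M] {x y : M} {s t : Fin n →₀ M} :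
    cons x s ≤ cons y t ↔ x ≤ y ∧ s ≤ t :=
  Fin.cons_le_cons (α := fun _ => M) (x := ⇑s) (y := ⇑t)

noncomputable def greedyPrefix : {n : ℕ} → ℕ → (Fin n →₀ ℕ) → (Fin n →₀ ℕ)
  | 0, _, _ => 0
  | _ + 1, D, f => cons (min (f 0) D) (greedyPrefix (D - f 0) f.tail)

theorem greedyPrefix_cons (D x : ℕ) (s : Fin n →₀ ℕ) :
    greedyPrefix D (cons x s) = cons (min x D) (greedyPrefix (D - x) s) := by
  simp only [greedyPrefix, cons_zero, tail_cons]

theorem greedyPrefix_le (D : ℕ) (f : Fin n →₀ ℕ) : greedyPrefix D f ≤ f := by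
  induction n generalizing D with
  | zero => exact fun i => i.elim0
  | succ n ih =>
    rw [← cons_tail f, greedyPrefix_cons, cons_le_cons_iff]
    exact ⟨min_le_left _ _, ih _ _⟩

theorem degree_greedyPrefix (D : ℕ) (f : Fin n →₀ ℕ) :
    (greedyPrefix D f).degree = min f.degree D := by
  induction n generalizing D with
  | zero => simp [greedyPrefix, Subsingleton.elim f 0]
  | succ n ih =>
    rw [← cons_tail f, greedyPrefix_cons, degree_cons, degree_cons, ih]
    omega

theorem toLex_le_greedyPrefix {D : ℕ} {a m' m : Fin n →₀ ℕ} (ha : a ≤ m') (hdeg : a.degree ≤ D)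
    (hlex : toLex m' ≤ toLex m) : toLex a ≤ toLex (greedyPrefix D m) := by
  induction n generalizing D with
  | zero => simp [Subsingleton.elim a (greedyPrefix D m)]
  | succ n ih =>
    obtain ⟨a₀, a, rfl⟩ : ∃ x s, a = cons x s := ⟨_, _, (cons_tail a).symm⟩
    obtain ⟨m'₀, m', rfl⟩ : ∃ x s, m' = cons x s := ⟨_, _, (cons_tail m').symm⟩
    obtain ⟨m₀, m, rfl⟩ : ∃ x s, m = cons x s := ⟨_, _, (cons_tail m).symm⟩
    rw [cons_le_cons_iff] at ha
    rw [toLex_cons_le_cons_iff] at hlex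
    rw [degree_cons] at hdeg
    rw [greedyPrefix_cons, toLex_cons_le_cons_iff]
    have ha₀ : a₀ ≤ min m₀ D := le_min (ha.1.trans (hlex.elim le_of_lt fun h => h.1.le)) (by omega)
    refine ha₀.lt_or_eq.imp_right fun heq => ⟨heq, ?_⟩
    rcases hlex with hlt | ⟨rfl, hlex⟩
    · obtain rfl : a = 0 := (degree_eq_zero_iff a).mp (by omega)
      exact toLex_monotone zero_le
    · exact ih ha.2 (by omega) hlex

end Finsupp

namespace MvPolynomial

theorem monomial_one_mem_span_monomial_image_iff {σ R : Type*} [CommSemiring R] [Nontrivial R]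
    {a : σ →₀ ℕ} {s : Set (σ →₀ ℕ)} :
    monomial a (1 : R) ∈ Ideal.span ((fun b => monomial b (1 : R)) '' s) ↔ ∃ b ∈ s, b ≤ a := by
  classical
  rw [mem_ideal_span_monomial_image, support_monomial, if_neg one_ne_zero]
  simp

end MvPolynomial

theorem stmt18 (F : Type) [Field F] (n D : ℕ) (S : Set (Fin n →₀ ℕ))
    -- `S` is a set of monomials of degree `D` ...
    (hSdeg : ∀ m ∈ S, (m.sum fun _ e => e) = D)
    -- ... which is a lex segment within degree `D`
    (hSseg : ∀ m m' : Fin n →₀ ℕ, (m.sum fun _ e => e) = D → toLex m' ≤ toLex m →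
      m' ∈ S → m ∈ S) :
    -- then for every `d ≥ D`, the degree-`d` monomials of the ideal generated by `S`
    -- form a lex segment
    ∀ d : ℕ, D ≤ d → ∀ m m' : Fin n →₀ ℕ,
      (m.sum fun _ e => e) = d → (m'.sum fun _ e => e) = d → toLex m' ≤ toLex m →
      MvPolynomial.monomial m' (1 : F) ∈
        Ideal.span ((fun a => MvPolynomial.monomial a (1 : F)) '' S) →
      MvPolynomial.monomial m (1 : F) ∈
        Ideal.span ((fun a => MvPolynomial.monomial a (1 : F)) '' S) := by
  intro d hDd m m' hm _ hlex hm'I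
  rw [monomial_one_mem_span_monomial_image_iff] at hm'I ⊢
  obtain ⟨a, haS, ham'⟩ := hm'I
  have hdeg : (Finsupp.greedyPrefix D m).degree = D :=
    (Finsupp.degree_greedyPrefix D m).trans (min_eq_right (hDd.trans_eq hm.symm))
  have hlex' : toLex a ≤ toLex (Finsupp.greedyPrefix D m) :=
    Finsupp.toLex_le_greedyPrefix ham' (hSdeg a haS).le hlex
  exact ⟨_, hSseg _ a hdeg hlex' haS, Finsupp.greedyPrefix_le D m⟩
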